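/- arXiv:2602.19066 — 2 statements merged into one kernel-verified Lean document; each statement's English description precedes it below -/
import Mathlib

section
/- Let N ≥ 2, let Q_abs be the absorbing diffusion matrix with mask index m, and let e_m ∈ ℝ^N denote the one-hot vector with a 1 at index m. Then for every x in the probability simplex of ℝ^N, the vector Matrix.exp (c • Q_abs) *ᵥ x tends to e_m as c → ∞ (Filter.Tendsto along atTop). -/
open Matrix Filter

/-- The absorbing diffusion matrix on `N` categories (`N ≥ 2`), with mask index `m` the last
index: `(Q_abs)_{ii} = −1` for `i ≠ m`, `(Q_abs)_{mj} = 1` for `j ≠ m`, all other entries `0`. -/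
def Qabs (N : ℕ) (m : Fin N) : Matrix (Fin N) (Fin N) ℝ :=
  Matrix.of fun i j =>
    if i = j ∧ i ≠ m then -1
    else if i = m ∧ j ≠ m then 1
    else 0

/-!
Write `R = e_m 𝟙ᵀ`. Then `Q_abs = -(1 - R)`, and `1 - R` is idempotent because `𝟙ᵀ e_m = 1`.
For an idempotent `P` all powers `Pⁿ` with `n ≥ 1` equal `P`, so the exponential series collapses
to `exp (t • P) = (1 - P) + eᵗ • P`. Hence `exp (c • Q_abs) = R + e⁻ᶜ • (1 - R) → R`, and `R`
sends every `x` of total mass `1` to `e_m`.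
-/

open scoped Nat

section IdempotentExp

variable {A : Type*} [Ring A] [Algebra ℝ A] [TopologicalSpace A] [IsTopologicalRing A]
  [ContinuousSMul ℝ A] [T2Space A] {P : A}

theorem IsIdempotentElem.exp_smul (hP : IsIdempotentElem P) (t : ℝ) :
    NormedSpace.exp (t • P) = (1 - P) + Real.exp t • P := by
  have hterm : ∀ n : ℕ, (n !⁻¹ : ℝ) • (t • P) ^ n
      = (if n = 0 then 1 - P else 0) + (t ^ n / n !) • P := by
    rintro (_ | n)
    · simp
    · rw [smul_pow, hP.pow_succ_eq, smul_smul, if_neg n.succ_ne_zero, zero_add, inv_mul_eq_div]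
  have hsum : HasSum (fun n : ℕ => (n !⁻¹ : ℝ) • (t • P) ^ n) ((1 - P) + Real.exp t • P) := by
    simp only [hterm]
    refine (hasSum_ite_eq 0 (1 - P)).add ?_
    rw [Real.exp_eq_exp_ℝ]
    exact (NormedSpace.expSeries_div_hasSum_exp t).smul_const P
  rw [NormedSpace.exp_eq_tsum ℝ]
  exact hsum.tsum_eq

theorem IsIdempotentElem.tendsto_exp_neg_smul (hP : IsIdempotentElem P) :
    Tendsto (fun t : ℝ => NormedSpace.exp (-t • P)) atTop (nhds (1 - P)) := by
  simp_rw [hP.exp_smul]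
  simpa using tendsto_const_nhds.add (Real.tendsto_exp_neg_atTop_nhds_zero.smul_const P)

end IdempotentExp

theorem Matrix.isIdempotentElem_vecMulVec {n α : Type*} [Fintype n] [CommSemiring α]
    {u v : n → α} (h : v ⬝ᵥ u = 1) : IsIdempotentElem (vecMulVec u v) := by
  rw [IsIdempotentElem, vecMulVec_mul_vecMulVec, h, one_smul]

theorem Qabs_eq_neg_one_sub_vecMulVec (N : ℕ) (m : Fin N) :
    Qabs N m = -(1 - vecMulVec (Pi.single m 1) 1) := by
  ext i j
  by_cases hi : i = m <;> by_cases hj : i = j <;> simp_all [Qabs, one_apply, eq_comm]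

theorem absorbing_limit_general (N : ℕ) (m : Fin N)
    (x : Fin N → ℝ) (hsum : ∑ i, x i = 1) :
    Tendsto (fun c : ℝ => NormedSpace.exp (c • Qabs N m) *ᵥ x) atTop
      (nhds (Pi.single m 1)) := by
  set R := vecMulVec (Pi.single m (1 : ℝ)) (1 : Fin N → ℝ)
  have hR : IsIdempotentElem (1 - R) := (isIdempotentElem_vecMulVec (by simp)).one_sub
  have hRx : R *ᵥ x = Pi.single m 1 := by
    rw [vecMulVec_mulVec, one_dotProduct, hsum, MulOpposite.op_one, one_smul]
  have hQ : ∀ c : ℝ, c • Qabs N m = -c • (1 - R) := fun c => by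
    rw [Qabs_eq_neg_one_sub_vecMulVec, smul_neg, neg_smul]
  have hmulVec : Continuous fun B : Matrix (Fin N) (Fin N) ℝ => B *ᵥ x :=
    continuous_id.matrix_mulVec continuous_const
  have hlim := (hmulVec.tendsto _).comp hR.tendsto_exp_neg_smul
  rw [sub_sub_cancel, hRx] at hlim
  simpa only [hQ, Function.comp_def] using hlim

/-- For every `x` in the probability simplex, `exp (c • Q_abs) *ᵥ x` tends to the one-hot
vector at the mask index `m` as `c → ∞`: the absorbing forward process converges to the delta
distribution on the mask token. -/
theorem absorbing_limit (N : ℕ) (hN : 2 ≤ N) (m : Fin N) (hm : (m : ℕ) = N - 1)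
    (x : Fin N → ℝ) (hx : ∀ i, 0 ≤ x i) (hsum : ∑ i, x i = 1) :
    Tendsto (fun c : ℝ => NormedSpace.exp (c • Qabs N m) *ᵥ x) atTop
      (nhds (Pi.single m 1)) :=
  absorbing_limit_general N m x hsum
end

section
/- Let N ≥ 1 and let Q_uni = J − N • 1 be the uniform diffusion matrix, where J is the all-ones N×N real matrix and 1 the identity. Then for every x in the probability simplex of ℝ^N, the vector Matrix.exp (c • Q_uni) *ᵥ x tends to the uniform vector (1/N, …, 1/N) as c → ∞ (Filter.Tendsto along atTop). -/
/-!
Since `J * J = N • J`, the averaging matrix `Π = N⁻¹ • J` is idempotent and `Q_uni = -N • (1 - Π)`.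
For an idempotent `P` every power `P ^ (n + 1)` equals `P`, so the exponential series collapses to
`exp (t • P) = eᵗ • P + (1 - P)`. Hence `exp (c • Q_uni) = e^(-N c) • (1 - Π) + Π → Π`,
and `Π x` is the uniform vector whenever the entries of `x` sum to `1`.
-/

open Matrix Filter

/-- The all-ones `N × N` real matrix. -/
def allOnes (N : ℕ) : Matrix (Fin N) (Fin N) ℝ := Matrix.of fun _ _ => 1

/-- The uniform diffusion matrix `Q_uni = J − N • 1`. -/
def Quni (N : ℕ) : Matrix (Fin N) (Fin N) ℝ := allOnes N - (N : ℝ) • 1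

open NormedSpace in
theorem IsIdempotentElem.exp_smul_s10 {𝔸 : Type*} [Ring 𝔸] [Algebra ℝ 𝔸] [TopologicalSpace 𝔸]
    [IsTopologicalRing 𝔸] [ContinuousSMul ℝ 𝔸] [T2Space 𝔸] {P : 𝔸} (hP : IsIdempotentElem P)
    (t : ℝ) : exp (t • P) = Real.exp t • P + (1 - P) := by
  have hterm : ∀ n : ℕ, ((n.factorial : ℝ)⁻¹ • (t • P) ^ n)
      = ((n.factorial : ℝ)⁻¹ * t ^ n) • P + if n = 0 then 1 - P else 0 := by
    rintro (_ | n)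
    · simp
    · rw [smul_pow, hP.pow_succ_eq, smul_smul]
      simp
  have hsum : HasSum (fun n : ℕ => ((n.factorial : ℝ)⁻¹ * t ^ n) • P + if n = 0 then 1 - P else 0)
      (Real.exp t • P + (1 - P)) := by
    refine HasSum.add ?_ (hasSum_ite_eq 0 (1 - P))
    rw [Real.exp_eq_exp_ℝ]
    exact (exp_series_hasSum_exp' (𝕂 := ℝ) t).smul_const P
  rw [exp_eq_tsum ℝ]
  simp_rw [hterm]
  exact hsum.tsum_eq

theorem allOnes_mul_self (N : ℕ) : allOnes N * allOnes N = (N : ℝ) • allOnes N := by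
  ext i j
  simp [allOnes, mul_apply]

theorem allOnes_mulVec (N : ℕ) (x : Fin N → ℝ) : allOnes N *ᵥ x = fun _ => ∑ i, x i := by
  ext i
  simp [allOnes, mulVec, dotProduct]

noncomputable def averaging (N : ℕ) : Matrix (Fin N) (Fin N) ℝ := (N : ℝ)⁻¹ • allOnes N

theorem isIdempotentElem_averaging {N : ℕ} (hN : N ≠ 0) : IsIdempotentElem (averaging N) := by
  rw [IsIdempotentElem, averaging, smul_mul_smul_comm, allOnes_mul_self, smul_smul]
  congr 1
  field_simp

theorem Quni_eq_smul_one_sub_averaging {N : ℕ} (hN : N ≠ 0) :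
    Quni N = (-(N : ℝ)) • (1 - averaging N) := by
  rw [Quni, averaging, smul_sub, smul_smul, neg_mul, mul_inv_cancel₀ (by exact_mod_cast hN),
    neg_one_smul, neg_smul, sub_neg_eq_add, neg_add_eq_sub]

theorem exp_smul_Quni {N : ℕ} (hN : N ≠ 0) (c : ℝ) :
    NormedSpace.exp (c • Quni N) = Real.exp (-(N * c)) • (1 - averaging N) + averaging N := by
  rw [Quni_eq_smul_one_sub_averaging hN, smul_smul, mul_neg, mul_comm,
    (isIdempotentElem_averaging hN).one_sub.exp_smul_s10, sub_sub_cancel]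

theorem averaging_mulVec_of_sum_eq_one {N : ℕ} {x : Fin N → ℝ} (hsum : ∑ i, x i = 1) :
    averaging N *ᵥ x = fun _ => (1 : ℝ) / N := by
  rw [averaging, smul_mulVec, allOnes_mulVec, hsum]
  ext
  simp

theorem uniform_limit_general (N : ℕ) (hN : 1 ≤ N)
    (x : Fin N → ℝ) (hsum : ∑ i, x i = 1) :
    Tendsto (fun c : ℝ => NormedSpace.exp (c • Quni N) *ᵥ x) atTop
      (nhds (fun _ : Fin N => (1 : ℝ) / N)) := by
  have hN₀ : 0 < N := hN
  have hdecay : Tendsto (fun c : ℝ => Real.exp (-(N * c))) atTop (nhds 0) :=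
    Real.tendsto_exp_neg_atTop_nhds_zero.comp
      (tendsto_id.const_mul_atTop (by exact_mod_cast hN₀))
  have hlim := (hdecay.smul_const (x - averaging N *ᵥ x)).add_const (averaging N *ᵥ x)
  rw [zero_smul, zero_add, averaging_mulVec_of_sum_eq_one hsum] at hlim
  refine hlim.congr fun c => ?_
  rw [exp_smul_Quni hN₀.ne', add_mulVec, smul_mulVec, sub_mulVec, one_mulVec,
    averaging_mulVec_of_sum_eq_one hsum]

/-- For every `x` in the probability simplex, `exp (c • Q_uni) *ᵥ x` tends to the uniform
vector `(1/N, …, 1/N)` as `c → ∞`: the uniform forward process converges to the uniform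
distribution over the `N` categories. -/
theorem uniform_limit (N : ℕ) (hN : 1 ≤ N)
    (x : Fin N → ℝ) (hx : ∀ i, 0 ≤ x i) (hsum : ∑ i, x i = 1) :
    Tendsto (fun c : ℝ => NormedSpace.exp (c • Quni N) *ᵥ x) atTop
      (nhds (fun _ : Fin N => (1 : ℝ) / N)) :=
  uniform_limit_general N hN x hsum
end
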